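/- Suppose b > Nμχ/4. Let u₀ ∈ X₁⁺, v₀ ∈ X₂⁺, and let (u, v) be a bounded nonnegative global classical solution of (KS) with initial data (u₀, v₀). Let 0 < k < √a, set c = (k² + a)/k, and let ξ ∈ S^{N−1} and M > 0 be such that u(x,t) ≤ M e^{−k(x·ξ − c t)} for all x ∈ ℝ^N and t ≥ 0. If d ≥ μM/(a + λ) and v₀(x) ≤ d e^{−k x·ξ} for all x ∈ ℝ^N, then v(x,t) ≤ d e^{−k(x·ξ − c t)} for all x ∈ ℝ^N and t > 0. -/

import Mathlib

open Real Filter MeasureTheory RealInnerProductSpace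

noncomputable section

/-- Euclidean space `ℝ^N`. -/
abbrev Eu (N : ℕ) := EuclideanSpace ℝ (Fin N)

/-- First-order partial derivative in the `i`-th coordinate direction. -/
def pd {N : ℕ} (f : Eu N → ℝ) (i : Fin N) (x : Eu N) : ℝ :=
  fderiv ℝ f x (EuclideanSpace.single i 1)

/-- Second-order partial derivative `∂_{x_i x_j}`. -/
def pd2 {N : ℕ} (f : Eu N → ℝ) (i j : Fin N) (x : Eu N) : ℝ :=
  pd (fun y => pd f j y) i x

/-- Laplacian `Δf = Σ_i ∂²f/∂x_i²`. -/
def lap {N : ℕ} (f : Eu N → ℝ) (x : Eu N) : ℝ := ∑ i, pd2 f i i x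

/-- Divergence `∇·F = Σ_i ∂F_i/∂x_i` of a vector field. -/
def divg {N : ℕ} (F : Eu N → Eu N) (x : Eu N) : ℝ :=
  ∑ i, fderiv ℝ (fun y => F y i) x (EuclideanSpace.single i 1)

/-- `(u,v)` is a global classical solution of (KS) with initial data `(u₀,v₀)`:
continuous on `ℝ^N × [0,∞)`, once continuously differentiable in `t` and twice in `x`
for `t > 0`, satisfying both equations pointwise for `t > 0`. -/
structure IsClassicalSolution {N : ℕ} (χ a b lam mu : ℝ)
    (u v : Eu N → ℝ → ℝ) (u₀ v₀ : Eu N → ℝ) : Prop where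
  contu : ContinuousOn (fun p : Eu N × ℝ => u p.1 p.2) {p : Eu N × ℝ | 0 ≤ p.2}
  contv : ContinuousOn (fun p : Eu N × ℝ => v p.1 p.2) {p : Eu N × ℝ | 0 ≤ p.2}
  regu : ∀ t : ℝ, 0 < t → ContDiff ℝ 2 (fun x => u x t)
  regv : ∀ t : ℝ, 0 < t → ContDiff ℝ 2 (fun x => v x t)
  pdeu : ∀ (x : Eu N) (t : ℝ), 0 < t →
    HasDerivAt (fun s => u x s)
      (lap (fun y => u y t) x
        - χ * divg (fun y => u y t • gradient (fun z => v z t) y) x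
        + u x t * (a - b * u x t)) t
  pdev : ∀ (x : Eu N) (t : ℝ), 0 < t →
    HasDerivAt (fun s => v x s)
      (lap (fun y => v y t) x - lam * v x t + mu * u x t) t
  initu : ∀ x, u x 0 = u₀ x
  initv : ∀ x, v x 0 = v₀ x

/-- A solution is bounded on `ℝ^N × [0,∞)`. -/
def BoundedSol {N : ℕ} (u v : Eu N → ℝ → ℝ) : Prop :=
  ∃ C : ℝ, ∀ (x : Eu N) (t : ℝ), 0 ≤ t → |u x t| ≤ C ∧ |v x t| ≤ C

/-- A solution is nonnegative. -/
def NonnegSol {N : ℕ} (u v : Eu N → ℝ → ℝ) : Prop :=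
  ∀ (x : Eu N) (t : ℝ), 0 ≤ t → 0 ≤ u x t ∧ 0 ≤ v x t

/-- Membership in `X₁⁺`: bounded, uniformly continuous and nonnegative. -/
def MemX1plus {N : ℕ} (f : Eu N → ℝ) : Prop :=
  UniformContinuous f ∧ (∃ C, ∀ x, |f x| ≤ C) ∧ ∀ x, 0 ≤ f x

/-- Membership in `X₂⁺`: in `X₁⁺`, differentiable, and all first-order partial
derivatives are bounded and uniformly continuous. -/
def MemX2plus {N : ℕ} (f : Eu N → ℝ) : Prop :=
  MemX1plus f ∧ Differentiable ℝ f ∧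
    ∀ i : Fin N, UniformContinuous (fun x => pd f i x) ∧ ∃ C, ∀ x, |pd f i x| ≤ C

/-! Put `W(x,t) = d e^{-k(x·ξ - ct)}`. Since `kc = k² + a` and `‖ξ‖ = 1`, `W_t = ΔW + aW`, and the
bound on `u` together with `μM ≤ d(a + λ)` gives `μu ≤ (a + λ)W`. Hence wherever `w = v - W` is
positive, `w_t - Δw = -λv + μu - aW ≤ -λw < 0`. Also `w ≤ 0` at `t = 0`, and `w` is bounded above
because `v` is bounded and `W ≥ 0`. A maximum principle on all of `ℝ^N` then gives `w ≤ 0`. To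
prove it, maximize `w - ε(‖x‖² + 2Nt)` over a large compact cylinder. The perturbation solves the
heat equation, so `w_t - Δw` is unchanged, and its growth keeps the maximum away from the lateral
boundary. At a positive maximum `w_t ≥ Δw`, which is impossible; finally let `ε → 0`. -/

section OneDimensional

open Set Topology

/- If `deriv (deriv f) x₀ > 0`, the second-derivative test makes `x₀` also a local minimum, so
`f` is locally constant and `deriv (deriv f) x₀ = 0`. -/
theorem IsLocalMax.deriv_deriv_nonpos {f : ℝ → ℝ} {x₀ : ℝ} (h : IsLocalMax f x₀)
    (hc : ContinuousAt f x₀) : deriv (deriv f) x₀ ≤ 0 := by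
  by_contra! hpos
  have hmin := isLocalMin_of_deriv_deriv_pos hpos h.deriv_eq_zero hc
  have hconst : f =ᶠ[𝓝 x₀] fun _ => f x₀ := by
    filter_upwards [h, hmin] with x hle hge
    exact le_antisymm hle hge
  have hderiv : deriv f =ᶠ[𝓝 x₀] fun _ => 0 := by
    simpa using hconst.deriv
  simp [hderiv.deriv_eq] at hpos

theorem HasDerivAt.nonneg_of_isMaxOn_Icc {g : ℝ → ℝ} {a b m : ℝ} (hab : a < b)
    (hg : HasDerivAt g m b) (hmax : IsMaxOn g (Icc a b) b) : 0 ≤ m := by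
  have hcone : a - b ∈ posTangentConeAt (Icc a b) b :=
    sub_mem_posTangentConeAt_of_segment_subset
      ((convex_Icc a b).segment_subset (right_mem_Icc.2 hab.le) (left_mem_Icc.2 hab.le))
  have := IsLocalMaxOn.hasFDerivWithinAt_nonpos hmax.localize
    hg.hasFDerivAt.hasFDerivWithinAt hcone
  simp only [ContinuousLinearMap.toSpanSingleton_apply, smul_eq_mul] at this
  nlinarith

end OneDimensional

section PartialDerivatives

variable {N : ℕ}

lemma pd_eq_of_hasFDerivAt {f : Eu N → ℝ} {f' : Eu N →L[ℝ] ℝ} {x : Eu N}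
    (hf : HasFDerivAt f f' x) (i : Fin N) : pd f i x = f' (EuclideanSpace.single i 1) := by
  rw [pd, hf.fderiv]

lemma differentiable_pd {f : Eu N → ℝ} (hf : ContDiff ℝ 2 f) (i : Fin N) :
    Differentiable ℝ (pd f i) :=
  ((ContinuousLinearMap.apply ℝ ℝ (EuclideanSpace.single i (1 : ℝ))).contDiff.comp
    (hf.fderiv_right (m := 1) (by norm_num))).differentiable one_ne_zero

lemma pd_sub {f g : Eu N → ℝ} {x : Eu N} (hf : DifferentiableAt ℝ f x)
    (hg : DifferentiableAt ℝ g x) (i : Fin N) :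
    pd (fun y => f y - g y) i x = pd f i x - pd g i x := by
  rw [pd, fderiv_fun_sub hf hg]
  rfl

lemma lap_sub {f g : Eu N → ℝ} (hf : ContDiff ℝ 2 f) (hg : ContDiff ℝ 2 g) (x : Eu N) :
    lap (fun y => f y - g y) x = lap f x - lap g x := by
  have hpd (i : Fin N) : (fun y => pd (fun y => f y - g y) i y) = fun y => pd f i y - pd g i y :=
    funext fun y => pd_sub (hf.differentiable (by norm_num) y) (hg.differentiable (by norm_num) y) i
  simp only [lap, pd2, hpd, pd_sub (differentiable_pd hf _ x) (differentiable_pd hg _ x),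
    Finset.sum_sub_distrib]

lemma pd2_nonpos_of_isLocalMax {f : Eu N → ℝ} {x₀ : Eu N} (hf : ContDiff ℝ 2 f)
    (hmax : IsLocalMax f x₀) (i : Fin N) : pd2 f i i x₀ ≤ 0 := by
  set e : Eu N := EuclideanSpace.single i 1
  have hline (s : ℝ) : HasDerivAt (fun s : ℝ => x₀ + s • e) e s := by
    simpa using ((hasDerivAt_id s).smul_const e).const_add x₀
  have hderiv : deriv (fun s : ℝ => f (x₀ + s • e)) = fun s => pd f i (x₀ + s • e) :=
    funext fun s =>
      ((hf.differentiable (by norm_num) _).hasFDerivAt.comp_hasDerivAt s (hline s)).deriv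
  have hderiv2 : deriv (deriv fun s : ℝ => f (x₀ + s • e)) 0 = pd2 f i i x₀ := by
    rw [hderiv]
    exact ((differentiable_pd hf i x₀).hasFDerivAt.comp_hasDerivAt_of_eq 0 (hline 0)
      (by simp)).deriv
  have hmax' : IsLocalMax (fun s : ℝ => f (x₀ + s • e)) 0 := by
    have h0 : x₀ + (0 : ℝ) • e = x₀ := by simp
    rw [← h0] at hmax
    exact hmax.comp_continuous (g := fun s : ℝ => x₀ + s • e) (by fun_prop)
  rw [← hderiv2]
  exact hmax'.deriv_deriv_nonpos (hf.continuous.comp (by fun_prop)).continuousAt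

lemma lap_nonpos_of_isLocalMax {f : Eu N → ℝ} {x₀ : Eu N} (hf : ContDiff ℝ 2 f)
    (hmax : IsLocalMax f x₀) : lap f x₀ ≤ 0 :=
  Finset.sum_nonpos fun i _ => pd2_nonpos_of_isLocalMax hf hmax i

lemma pd_mul_norm_sq_add (α β : ℝ) (i : Fin N) (x : Eu N) :
    pd (fun y => α * (‖y‖ ^ 2 + β)) i x = 2 * α * x i := by
  rw [pd_eq_of_hasFDerivAt (((hasStrictFDerivAt_norm_sq x).hasFDerivAt.add_const β).const_mul α)]
  simp only [smul_apply, coe_innerSL_apply, EuclideanSpace.inner_single_right,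
    Real.ringHom_apply, one_mul, nsmul_eq_mul, Nat.cast_ofNat, smul_eq_mul]
  ring

lemma pd2_mul_norm_sq_add (α β : ℝ) (i : Fin N) (x : Eu N) :
    pd2 (fun y => α * (‖y‖ ^ 2 + β)) i i x = 2 * α := by
  have hpd : (fun y => pd (fun y => α * (‖y‖ ^ 2 + β)) i y)
      = fun y => (2 * α) * EuclideanSpace.proj (𝕜 := ℝ) i y :=
    funext fun y => pd_mul_norm_sq_add α β i y
  rw [pd2, hpd, pd_eq_of_hasFDerivAt ((EuclideanSpace.proj i).hasFDerivAt.const_mul (2 * α))]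
  simp

lemma lap_mul_norm_sq_add (α β : ℝ) (x : Eu N) :
    lap (fun y => α * (‖y‖ ^ 2 + β)) x = 2 * N * α := by
  simp only [lap, pd2_mul_norm_sq_add, Finset.sum_const, Finset.card_univ, Fintype.card_fin,
    nsmul_eq_mul]
  ring

lemma pd_mul_exp_inner (ξ : Eu N) (α k β : ℝ) (i : Fin N) (x : Eu N) :
    pd (fun y => α * exp (-k * (⟪y, ξ⟫ - β))) i x
      = -k * ξ i * (α * exp (-k * (⟪x, ξ⟫ - β))) := by
  have hinner : HasFDerivAt (fun y : Eu N => ⟪y, ξ⟫) (innerSL ℝ ξ) x := by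
    convert (innerSL ℝ ξ).hasFDerivAt using 1
    exact funext fun y => real_inner_comm ξ y
  rw [pd_eq_of_hasFDerivAt (((hinner.sub_const β).const_mul (-k)).exp.const_mul α)]
  simp only [smul_apply, coe_innerSL_apply, EuclideanSpace.inner_single_right,
    Real.ringHom_apply, one_mul, smul_eq_mul]
  ring

lemma pd2_mul_exp_inner (ξ : Eu N) (α k β : ℝ) (i : Fin N) (x : Eu N) :
    pd2 (fun y => α * exp (-k * (⟪y, ξ⟫ - β))) i i x
      = k ^ 2 * ξ i ^ 2 * (α * exp (-k * (⟪x, ξ⟫ - β))) := by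
  have hpd : (fun y => pd (fun y => α * exp (-k * (⟪y, ξ⟫ - β))) i y)
      = fun y => (-k * ξ i * α) * exp (-k * (⟪y, ξ⟫ - β)) :=
    funext fun y => by rw [pd_mul_exp_inner]; ring
  rw [pd2, hpd, pd_mul_exp_inner]
  ring

lemma lap_mul_exp_inner (ξ : Eu N) (α k β : ℝ) (x : Eu N) :
    lap (fun y => α * exp (-k * (⟪y, ξ⟫ - β))) x
      = k ^ 2 * ‖ξ‖ ^ 2 * (α * exp (-k * (⟪x, ξ⟫ - β))) := by
  simp only [lap, pd2_mul_exp_inner, EuclideanSpace.real_norm_sq_eq, Finset.mul_sum,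
    Finset.sum_mul]

lemma contDiff_mul_exp_inner (ξ : Eu N) (α k β : ℝ) :
    ContDiff ℝ 2 (fun y : Eu N => α * exp (-k * (⟪y, ξ⟫ - β))) :=
  contDiff_const.mul (contDiff_const.mul ((contDiff_id.inner ℝ contDiff_const).sub
    contDiff_const)).exp

end PartialDerivatives

section MaximumPrinciple

open Set

variable {N : ℕ}

structure IsStrictHeatSubsolutionWherePos (w w' : Eu N → ℝ → ℝ) : Prop where
  continuousOn : ContinuousOn (fun p : Eu N × ℝ => w p.1 p.2) {p | 0 ≤ p.2}
  contDiff : ∀ t, 0 < t → ContDiff ℝ 2 (fun x => w x t)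
  hasDerivAt : ∀ x t, 0 < t → HasDerivAt (fun s => w x s) (w' x t) t
  lt_lap : ∀ x t, 0 < t → 0 < w x t → w' x t < lap (fun y => w y t) x

lemma lap_le_of_isMax_sub_caloric {w : Eu N → ℝ → ℝ} {w' ε t₀ : ℝ} {x₀ : Eu N} (ht₀ : 0 < t₀)
    (hreg : ContDiff ℝ 2 (fun x => w x t₀)) (hderiv : HasDerivAt (fun s => w x₀ s) w' t₀)
    (hspace : IsLocalMax (fun x => w x t₀ - ε * (‖x‖ ^ 2 + 2 * N * t₀)) x₀)
    (htime : IsMaxOn (fun s => w x₀ s - ε * (‖x₀‖ ^ 2 + 2 * N * s)) (Icc 0 t₀) t₀) :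
    lap (fun x => w x t₀) x₀ ≤ w' := by
  have hq : ContDiff ℝ 2 (fun x : Eu N => ε * (‖x‖ ^ 2 + 2 * N * t₀)) :=
    contDiff_const.mul ((contDiff_norm_sq ℝ).add contDiff_const)
  have hlap := lap_nonpos_of_isLocalMax (hreg.sub hq) hspace
  rw [lap_sub hreg hq, lap_mul_norm_sq_add] at hlap
  have hdt : HasDerivAt (fun s => w x₀ s - ε * (‖x₀‖ ^ 2 + 2 * N * s)) (w' - ε * (2 * N)) t₀ :=
    hderiv.sub ((((hasDerivAt_id t₀).const_mul _).const_add _).const_mul ε |>.congr_deriv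
      (by simp))
  have htime' := hdt.nonneg_of_isMaxOn_Icc ht₀ htime
  linarith

lemma le_mul_of_isStrictHeatSubsolutionWherePos {w w' : Eu N → ℝ → ℝ} {C ε : ℝ}
    (hw : IsStrictHeatSubsolutionWherePos w w') (hinit : ∀ x, w x 0 ≤ 0)
    (hbdd : ∀ x t, 0 ≤ t → w x t ≤ C) (hε : 0 < ε) {x : Eu N} {t : ℝ} (ht : 0 ≤ t) :
    w x t ≤ ε * (‖x‖ ^ 2 + 2 * N * t) := by
  by_contra! hpos
  set Z : Eu N × ℝ → ℝ := fun p => w p.1 p.2 - ε * (‖p.1‖ ^ 2 + 2 * N * p.2)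
  -- `Z < 0` outside the ball of radius `R`
  obtain ⟨R, hCR, hxR⟩ : ∃ R, C < ε * R ^ 2 ∧ ‖x‖ ≤ R :=
    (((tendsto_pow_atTop two_ne_zero).const_mul_atTop hε).eventually_gt_atTop C |>.and
      (eventually_ge_atTop ‖x‖)).exists
  set K := Metric.closedBall (0 : Eu N) R ×ˢ Icc 0 t
  have hxK : (x, t) ∈ K := ⟨mem_closedBall_zero_iff.2 hxR, ht, le_rfl⟩
  have hZ : ContinuousOn Z K :=
    (hw.continuousOn.mono fun p hp => hp.2.1).sub (by fun_prop : Continuous _).continuousOn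
  obtain ⟨⟨x₀, t₀⟩, ⟨hx₀, ht₀0, ht₀t⟩, hmax⟩ :=
    ((isCompact_closedBall _ _).prod isCompact_Icc).exists_isMaxOn ⟨_, hxK⟩ hZ
  have hZpos : 0 < Z (x₀, t₀) := (sub_pos.2 hpos).trans_le (hmax hxK)
  have ht₀ : 0 < t₀ := by
    refine ht₀0.lt_of_ne fun h => hZpos.not_ge ?_
    subst h
    have := hinit x₀
    simp only [Z]
    nlinarith [sq_nonneg ‖x₀‖]
  have hcaloric : 0 ≤ ε * (‖x₀‖ ^ 2 + 2 * N * t₀) := by positivity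
  have hw₀ : 0 < w x₀ t₀ := by simp only [Z] at hZpos; linarith
  have hx₀R : ‖x₀‖ < R := by
    have hsq : ε * ‖x₀‖ ^ 2 < ε * R ^ 2 := by
      have := hbdd x₀ t₀ ht₀0
      have : 0 ≤ ε * (2 * N * t₀) := by positivity
      simp only [Z] at hZpos
      linarith
    exact lt_of_pow_lt_pow_left₀ 2 ((norm_nonneg x).trans hxR) (lt_of_mul_lt_mul_left hsq hε.le)
  have hspace : IsLocalMax (fun y => w y t₀ - ε * (‖y‖ ^ 2 + 2 * N * t₀)) x₀ := by
    filter_upwards [Metric.isOpen_ball.mem_nhds (mem_ball_zero_iff.2 hx₀R)] with y hy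
    exact hmax (show (y, t₀) ∈ K from ⟨Metric.ball_subset_closedBall hy, ht₀0, ht₀t⟩)
  have htime : IsMaxOn (fun s => w x₀ s - ε * (‖x₀‖ ^ 2 + 2 * N * s)) (Icc 0 t₀) t₀ :=
    fun s hs => hmax (show (x₀, s) ∈ K from ⟨hx₀, hs.1, hs.2.trans ht₀t⟩)
  exact (hw.lt_lap x₀ t₀ ht₀ hw₀).not_ge
    (lap_le_of_isMax_sub_caloric ht₀ (hw.contDiff t₀ ht₀) (hw.hasDerivAt x₀ t₀ ht₀) hspace htime)

theorem nonpos_of_isStrictHeatSubsolutionWherePos {w w' : Eu N → ℝ → ℝ} {C : ℝ}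
    (hw : IsStrictHeatSubsolutionWherePos w w') (hinit : ∀ x, w x 0 ≤ 0)
    (hbdd : ∀ x t, 0 ≤ t → w x t ≤ C) {x : Eu N} {t : ℝ} (ht : 0 ≤ t) : w x t ≤ 0 := by
  refine le_of_forall_pos_lt_add fun ε hε => ?_
  set B := ‖x‖ ^ 2 + 2 * N * t
  have hB : 0 ≤ B := by positivity
  calc w x t ≤ ε / (B + 1) * B :=
        le_mul_of_isStrictHeatSubsolutionWherePos hw hinit hbdd (by positivity) ht
    _ < 0 + ε := by
        rw [zero_add, div_mul_eq_mul_div, div_lt_iff₀ (by positivity)]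
        nlinarith

end MaximumPrinciple

lemma isStrictHeatSubsolutionWherePos_sub_wave {N : ℕ} {χ a b lam mu k c d M : ℝ} {ξ : Eu N}
    {u v : Eu N → ℝ → ℝ} {u₀ v₀ : Eu N → ℝ} (hsol : IsClassicalSolution χ a b lam mu u v u₀ v₀)
    (hlam : 0 < lam) (hmu : 0 ≤ mu) (hkc : k * c = k ^ 2 + a) (hξ : ‖ξ‖ = 1)
    (hu : ∀ x t, 0 ≤ t → u x t ≤ M * exp (-k * (⟪x, ξ⟫ - c * t)))
    (hmuM : mu * M ≤ d * (a + lam)) :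
    IsStrictHeatSubsolutionWherePos (fun x t => v x t - d * exp (-k * (⟪x, ξ⟫ - c * t)))
      (fun x t => lap (fun y => v y t) x - lam * v x t + mu * u x t
        - (k ^ 2 + a) * (d * exp (-k * (⟪x, ξ⟫ - c * t)))) where
  continuousOn := hsol.contv.sub (by fun_prop : Continuous _).continuousOn
  contDiff t ht := (hsol.regv t ht).sub (contDiff_mul_exp_inner ξ d k (c * t))
  hasDerivAt x t ht := (hsol.pdev x t ht).sub <|
    ((((hasDerivAt_id t).const_mul c).const_sub ⟪x, ξ⟫).const_mul (-k)).exp.const_mul d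
      |>.congr_deriv (by rw [← hkc]; simp only [id]; ring)
  lt_lap x t ht hpos := by
    set E := exp (-k * (⟪x, ξ⟫ - c * t))
    rw [lap_sub (hsol.regv t ht) (contDiff_mul_exp_inner ξ d k (c * t)), lap_mul_exp_inner, hξ]
    have hu' : mu * u x t ≤ (a + lam) * (d * E) :=
      calc mu * u x t ≤ mu * (M * E) := mul_le_mul_of_nonneg_left (hu x t ht.le) hmu
        _ ≤ (a + lam) * (d * E) := by nlinarith [exp_pos (-k * (⟪x, ξ⟫ - c * t))]
    nlinarith

theorem statement16_general (N : ℕ) (χ a b lam mu : ℝ)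
    (ha : 0 < a) (hlam : 0 < lam) (hmu : 0 < mu)
    (u₀ v₀ : Eu N → ℝ)
    (u v : Eu N → ℝ → ℝ)
    (hsol : IsClassicalSolution χ a b lam mu u v u₀ v₀)
    (hbd : BoundedSol u v)
    (k c : ℝ) (hk : 0 < k) (hc : c = (k ^ 2 + a) / k)
    (ξ : Eu N) (hξ : ‖ξ‖ = 1) (M : ℝ) (hM : 0 < M)
    (hu : ∀ (x : Eu N) (t : ℝ), 0 ≤ t →
      u x t ≤ M * Real.exp (-k * (⟪x, ξ⟫ - c * t)))
    (d : ℝ) (hd : mu * M / (a + lam) ≤ d)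
    (hv0 : ∀ x : Eu N, v₀ x ≤ d * Real.exp (-k * ⟪x, ξ⟫)) :
    ∀ (x : Eu N) (t : ℝ), 0 < t →
      v x t ≤ d * Real.exp (-k * (⟪x, ξ⟫ - c * t)) := by
  intro x t ht
  obtain ⟨C, hC⟩ := hbd
  have hkc : k * c = k ^ 2 + a := by rw [hc]; field_simp
  have hd₀ : 0 ≤ d := (by positivity : 0 ≤ mu * M / (a + lam)).trans hd
  have hmuM : mu * M ≤ d * (a + lam) := (div_le_iff₀ (by positivity)).1 hd
  refine sub_nonpos.1 (nonpos_of_isStrictHeatSubsolutionWherePos (C := C)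
    (isStrictHeatSubsolutionWherePos_sub_wave hsol hlam hmu.le hkc hξ hu hmuM)
    (fun x => ?_) (fun x t ht => ?_) ht.le)
  · simpa [hsol.initv] using hv0 x
  · have hW := mul_nonneg hd₀ (exp_pos (-k * (⟪x, ξ⟫ - c * t))).le
    linarith [le_abs_self (v x t), (hC x t ht).2]

/-- exponential upper bound for `v` by comparison: if
`u(x,t) ≤ M e^{-k(x·ξ-ct)}`, `d ≥ μM/(a+λ)` and `v₀ ≤ d e^{-k x·ξ}`, then
`v(x,t) ≤ d e^{-k(x·ξ-ct)}` with `c = (k²+a)/k`. -/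
theorem statement16 (N : ℕ) (hN : 1 ≤ N) (χ a b lam mu : ℝ)
    (hχ : 0 < χ) (ha : 0 < a) (hb : 0 < b) (hlam : 0 < lam) (hmu : 0 < mu)
    (hcond : b > N * mu * χ / 4)
    (u₀ v₀ : Eu N → ℝ) (hu₀ : MemX1plus u₀) (hv₀ : MemX2plus v₀)
    (u v : Eu N → ℝ → ℝ)
    (hsol : IsClassicalSolution χ a b lam mu u v u₀ v₀)
    (hbd : BoundedSol u v) (hnn : NonnegSol u v)
    (k c : ℝ) (hk : 0 < k) (hk' : k < Real.sqrt a) (hc : c = (k ^ 2 + a) / k)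
    (ξ : Eu N) (hξ : ‖ξ‖ = 1) (M : ℝ) (hM : 0 < M)
    (hu : ∀ (x : Eu N) (t : ℝ), 0 ≤ t →
      u x t ≤ M * Real.exp (-k * (⟪x, ξ⟫ - c * t)))
    (d : ℝ) (hd : mu * M / (a + lam) ≤ d)
    (hv0 : ∀ x : Eu N, v₀ x ≤ d * Real.exp (-k * ⟪x, ξ⟫)) :
    ∀ (x : Eu N) (t : ℝ), 0 < t →
      v x t ≤ d * Real.exp (-k * (⟪x, ξ⟫ - c * t)) :=
  statement16_general N χ a b lam mu ha hlam hmu u₀ v₀ u v hsol hbd k c hk hc ξ hξ M hM hu d hd hv0
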